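/- Let ℓ be a line of unit normal ζ_i in a regular multigrid, z ∈ ℓ a multigrid vertex, and for n ∈ ℕ let z_n = z + α_n ζ_i^⊥ be the n-th intersection point of ℓ with other grid lines in direction ζ_i^⊥ (α_n > 0 increasing). Then there is a constant δ₀ depending only on d and the directions ζ such that |α_n - n·χ_i| ≤ δ₀ for all n, where χ_i := (Σ_{j≠i} |ζ_i^⊥·ζ_j|)^{-1}. In particular α_n/n → χ_i. -/

import Mathlib

open Set Filter

noncomputable section

/-- Scalar product on `ℂ ≅ ℝ²`: `z·w := Re(z * conj w)`. -/
def dotp (z w : ℂ) : ℝ := (z * (starRingEnd ℂ) w).re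

/-- Orthogonal vector: `ζ^⊥ := iζ`. -/
def perp (ζ : ℂ) : ℂ := Complex.I * ζ

/-- `z` lies on the grid `G(ζᵢ, γᵢ)`. -/
def onGrid {d : ℕ} (ζ : Fin d → ℂ) (γ : Fin d → ℝ) (i : Fin d) (z : ℂ) : Prop :=
  ∃ m : ℤ, dotp z (ζ i) - γ i = m

/-- The multigrid is regular: no point lies on grids of three distinct directions. -/
def Regular {d : ℕ} (ζ : Fin d → ℂ) (γ : Fin d → ℝ) : Prop :=
  ∀ z : ℂ, Set.ncard {i : Fin d | onGrid ζ γ i z} ≤ 2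

/-- The characteristic length `χᵢ := (∑_{j≠i} |ζᵢ^⊥·ζⱼ|)⁻¹`. -/
def charLen {d : ℕ} (ζ : Fin d → ℂ) (i : Fin d) : ℝ :=
  (∑ j ∈ Finset.univ.erase i, |dotp (perp (ζ i)) (ζ j)|)⁻¹

/-! Along the `i`-line through `z`, the `j`-line crossings (`j ≠ i`) sit at the parameters `t`
with `eⱼ + t cⱼ ∈ ℤ`, where `cⱼ = ζᵢ^⊥·ζⱼ ≠ 0` since `ζⱼ` is not parallel to `ζᵢ`; so `(0, T]`
contains `|cⱼ| T` of them up to an error of `1`. By regularity, crossings with different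
`j`-lines never coincide, so the number `n + 1` of intersection points in `(0, αₙ]` equals
`χᵢ⁻¹ αₙ` up to an error of `d - 1`, which gives `|αₙ - n χᵢ| ≤ d χᵢ`. -/

lemma dotp_perp (ζ w : ℂ) : dotp (perp ζ) w = (w * (starRingEnd ℂ) ζ).im := by
  simp only [dotp, perp, Complex.mul_re, Complex.mul_im, Complex.conj_re, Complex.conj_im,
    Complex.I_re, Complex.I_im]
  ring

lemma dotp_add_smul (z w v : ℂ) (t : ℝ) : dotp (z + t • w) v = dotp z v + t * dotp w v := by
  simp only [dotp, add_mul, Complex.add_re, Complex.real_smul, Complex.mul_re, Complex.mul_im,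
    Complex.ofReal_re, Complex.ofReal_im]
  ring

lemma dotp_perp_self (ζ : ℂ) : dotp (perp ζ) ζ = 0 := by
  simp [dotp_perp, Complex.mul_conj]

lemma dotp_perp_ne_zero {ζ w : ℂ} (hζ : ζ ≠ 0) (hw : ∀ t : ℝ, w ≠ t • ζ) :
    dotp (perp ζ) w ≠ 0 := by
  intro h
  apply hw ((w * (starRingEnd ℂ) ζ).re / Complex.normSq ζ)
  have hreal : w * (starRingEnd ℂ) ζ = ((w * (starRingEnd ℂ) ζ).re : ℂ) :=
    Complex.ext rfl (by simpa [dotp_perp] using h)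
  have hconj : (starRingEnd ℂ) ζ ≠ 0 := (map_ne_zero _).2 hζ
  rw [Complex.real_smul, Complex.ofReal_div, ← hreal, ← Complex.mul_conj]
  field_simp

def hitTimes (c e T : ℝ) : Set ℝ := {t ∈ Ioc 0 T | ∃ m : ℤ, e + t * c = m}

lemma hitTimes_neg (c e T : ℝ) : hitTimes (-c) (-e) T = hitTimes c e T := by
  ext t
  refine and_congr_right fun _ => ⟨?_, ?_⟩ <;>
    · rintro ⟨m, hm⟩
      exact ⟨-m, by push_cast; linarith⟩

lemma exists_hitTimes_abs_eq {c : ℝ} (hc : c ≠ 0) (e T : ℝ) :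
    ∃ e', hitTimes |c| e' T = hitTimes c e T := by
  rcases hc.lt_or_gt with hneg | hpos
  · exact ⟨-e, by rw [abs_of_neg hneg, hitTimes_neg]⟩
  · exact ⟨e, by rw [abs_of_pos hpos]⟩

lemma hitTimes_eq_image_Ioc {c : ℝ} (hc : 0 < c) (e T : ℝ) :
    hitTimes c e T = (fun m : ℤ => (m - e) / c) '' ↑(Finset.Ioc ⌊e⌋ ⌊e + T * c⌋) := by
  ext t
  simp only [hitTimes, Set.mem_ofPred_eq, Set.mem_Ioc, Set.mem_image, Finset.coe_Ioc,
    Int.floor_lt, Int.le_floor]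
  constructor
  · rintro ⟨⟨ht0, htT⟩, m, hm⟩
    refine ⟨m, ⟨by nlinarith, by nlinarith⟩, ?_⟩
    rw [← hm]
    field_simp
    ring
  · rintro ⟨m, ⟨hem, hmT⟩, rfl⟩
    refine ⟨⟨div_pos (by linarith) hc, (div_le_iff₀ hc).2 (by linarith)⟩, m, ?_⟩
    field_simp
    ring

lemma hitTimes_finite {c : ℝ} (hc : c ≠ 0) (e T : ℝ) : (hitTimes c e T).Finite := by
  obtain ⟨e', he'⟩ := exists_hitTimes_abs_eq hc e T
  rw [← he', hitTimes_eq_image_Ioc (abs_pos.2 hc)]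
  exact (Finset.finite_toSet _).image _

lemma ncard_hitTimes_of_pos {c T : ℝ} (hc : 0 < c) (hT : 0 ≤ T) (e : ℝ) :
    ((hitTimes c e T).ncard : ℤ) = ⌊e + T * c⌋ - ⌊e⌋ := by
  have hinj : Function.Injective fun m : ℤ => ((m : ℝ) - e) / c := fun a b hab => by
    simpa [div_left_inj' hc.ne'] using hab
  have hle : ⌊e⌋ ≤ ⌊e + T * c⌋ := Int.floor_mono (by nlinarith)
  rw [hitTimes_eq_image_Ioc hc, Set.ncard_image_of_injective _ hinj, Set.ncard_coe_finset,
    Int.card_Ioc, Int.toNat_of_nonneg (by omega)]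

lemma abs_ncard_hitTimes_sub_le {c T : ℝ} (hc : c ≠ 0) (hT : 0 ≤ T) (e : ℝ) :
    |((hitTimes c e T).ncard : ℝ) - |c| * T| ≤ 1 := by
  obtain ⟨e', he'⟩ := exists_hitTimes_abs_eq hc e T
  have hcard : ((hitTimes c e T).ncard : ℝ) = ⌊e' + T * |c|⌋ - ⌊e'⌋ := by
    rw [← he']
    exact_mod_cast ncard_hitTimes_of_pos (abs_pos.2 hc) hT e'
  rw [hcard, abs_le]
  have := Int.floor_le e'
  have := Int.lt_floor_add_one e'
  have := Int.floor_le (e' + T * |c|)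
  have := Int.lt_floor_add_one (e' + T * |c|)
  constructor <;> linarith

section Multigrid

variable {d : ℕ} {ζ : Fin d → ℂ} {γ : Fin d → ℝ}

lemma charLen_pos {i j : Fin d} (hji : j ≠ i)
    (hc : ∀ k ≠ i, dotp (perp (ζ i)) (ζ k) ≠ 0) : 0 < charLen ζ i :=
  inv_pos.2 <| Finset.sum_pos' (fun _ _ => abs_nonneg _)
    ⟨j, Finset.mem_erase.2 ⟨hji, Finset.mem_univ j⟩, abs_pos.2 (hc j hji)⟩

lemma Regular.eq_of_onGrid (hreg : Regular ζ γ) {p : ℂ} {i j k : Fin d}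
    (hi : onGrid ζ γ i p) (hj : onGrid ζ γ j p) (hk : onGrid ζ γ k p)
    (hji : j ≠ i) (hki : k ≠ i) : j = k := by
  by_contra hjk
  have hsub : ({i, j, k} : Set (Fin d)) ⊆ {l | onGrid ζ γ l p} := by
    rintro l (rfl | rfl | rfl) <;> assumption
  have h3 : ({i, j, k} : Set (Fin d)).ncard = 3 :=
    Set.ncard_eq_three.2 ⟨i, j, k, hji.symm, hki.symm, hjk, rfl⟩
  have := Set.ncard_le_ncard hsub (Set.toFinite _)
  have := hreg p
  omega

lemma onGrid_add_smul_perp_self {i : Fin d} {z : ℂ} (hz : onGrid ζ γ i z) (t : ℝ) :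
    onGrid ζ γ i (z + t • perp (ζ i)) := by
  obtain ⟨m, hm⟩ := hz
  exact ⟨m, by rw [dotp_add_smul, dotp_perp_self, mul_zero, add_zero, hm]⟩

variable (ζ γ) in
def crossings (i : Fin d) (z : ℂ) (j : Fin d) (T : ℝ) : Set ℝ :=
  {t ∈ Ioc 0 T | onGrid ζ γ j (z + t • perp (ζ i))}

lemma crossings_eq_hitTimes (i : Fin d) (z : ℂ) (j : Fin d) (T : ℝ) :
    crossings ζ γ i z j T = hitTimes (dotp (perp (ζ i)) (ζ j)) (dotp z (ζ j) - γ j) T := by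
  ext t
  refine and_congr_right fun _ => exists_congr fun m => ?_
  rw [dotp_add_smul]
  constructor <;> intro h <;> linarith

lemma pairwiseDisjoint_crossings (hreg : Regular ζ γ) {i : Fin d} {z : ℂ} (hz : onGrid ζ γ i z)
    (T : ℝ) : (↑(Finset.univ.erase i) : Set (Fin d)).PairwiseDisjoint (crossings ζ γ i z · T) :=
  fun _ hj _ hk hjk => Set.disjoint_left.2 fun _ htj htk =>
    hjk <| hreg.eq_of_onGrid (onGrid_add_smul_perp_self hz _) htj.2 htk.2
      (Finset.mem_erase.1 hj).1 (Finset.mem_erase.1 hk).1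

lemma image_Iic_eq_biUnion_crossings {i : Fin d} {z : ℂ} {α : ℕ → ℝ} (hmono : StrictMono α)
    (hpos : ∀ n, 0 < α n) (hint : ∀ n, ∃ j, j ≠ i ∧ onGrid ζ γ j (z + α n • perp (ζ i)))
    (hsur : ∀ x : ℝ, 0 < x → (∃ j, j ≠ i ∧ onGrid ζ γ j (z + x • perp (ζ i))) → ∃ n, α n = x)
    (n : ℕ) :
    α '' Iic n = ⋃ j ∈ (↑(Finset.univ.erase i) : Set (Fin d)), crossings ζ γ i z j (α n) := by
  ext t
  simp only [Set.mem_image, Set.mem_Iic, Set.mem_iUnion, Finset.coe_erase, Finset.coe_univ,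
    Set.mem_sdiff, Set.mem_univ, Set.mem_singleton_iff, true_and, exists_prop]
  constructor
  · rintro ⟨k, hkn, rfl⟩
    obtain ⟨j, hji, hj⟩ := hint k
    exact ⟨j, hji, ⟨hpos k, hmono.monotone hkn⟩, hj⟩
  · rintro ⟨j, hji, ⟨ht0, htn⟩, hj⟩
    obtain ⟨k, rfl⟩ := hsur t ht0 ⟨j, hji, hj⟩
    exact ⟨k, hmono.le_iff_le.1 htn, rfl⟩

lemma abs_sum_ncard_crossings_sub_le {i : Fin d} {z : ℂ} {T : ℝ}
    (hc : ∀ j ≠ i, dotp (perp (ζ i)) (ζ j) ≠ 0) (hT : 0 ≤ T) :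
    |∑ j ∈ Finset.univ.erase i, ((crossings ζ γ i z j T).ncard : ℝ) - (charLen ζ i)⁻¹ * T|
      ≤ d - 1 := by
  have hcard : ((Finset.univ.erase i).card : ℝ) = d - 1 := by
    rw [Finset.card_erase_of_mem (Finset.mem_univ i), Finset.card_univ, Fintype.card_fin,
      Nat.cast_pred (Fin.pos i)]
  calc |∑ j ∈ Finset.univ.erase i, ((crossings ζ γ i z j T).ncard : ℝ) - (charLen ζ i)⁻¹ * T|
      = |∑ j ∈ Finset.univ.erase i,
          (((crossings ζ γ i z j T).ncard : ℝ) - |dotp (perp (ζ i)) (ζ j)| * T)| := by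
        rw [charLen, inv_inv, Finset.sum_mul, Finset.sum_sub_distrib]
    _ ≤ ∑ j ∈ Finset.univ.erase i,
          |((crossings ζ γ i z j T).ncard : ℝ) - |dotp (perp (ζ i)) (ζ j)| * T| :=
        Finset.abs_sum_le_sum_abs _ _
    _ ≤ ∑ _j ∈ Finset.univ.erase i, (1 : ℝ) := Finset.sum_le_sum fun j hj => by
        rw [crossings_eq_hitTimes]
        exact abs_ncard_hitTimes_sub_le (hc j (Finset.mem_erase.1 hj).1) hT _
    _ = d - 1 := by rw [Finset.sum_const, nsmul_one, hcard]

lemma succ_eq_sum_ncard_crossings {i : Fin d} {z : ℂ} {α : ℕ → ℝ} (hreg : Regular ζ γ) (hz : onGrid ζ γ i z)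
    (hc : ∀ j ≠ i, dotp (perp (ζ i)) (ζ j) ≠ 0) (hmono : StrictMono α) (hpos : ∀ n, 0 < α n)
    (hint : ∀ n, ∃ j, j ≠ i ∧ onGrid ζ γ j (z + α n • perp (ζ i)))
    (hsur : ∀ x : ℝ, 0 < x → (∃ j, j ≠ i ∧ onGrid ζ γ j (z + x • perp (ζ i))) → ∃ n, α n = x)
    (n : ℕ) : n + 1 = ∑ j ∈ Finset.univ.erase i, (crossings ζ γ i z j (α n)).ncard := by
  have hfin : ∀ j ∈ (↑(Finset.univ.erase i) : Set (Fin d)), (crossings ζ γ i z j (α n)).Finite :=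
    fun j hj => by
      rw [crossings_eq_hitTimes]
      exact hitTimes_finite (hc j (Finset.mem_erase.1 hj).1) _ _
  rw [← finsum_mem_coe_finset, ← (Finset.finite_toSet _).ncard_biUnion hfin
    (pairwiseDisjoint_crossings hreg hz _), ← image_Iic_eq_biUnion_crossings hmono hpos hint hsur,
    Set.ncard_image_of_injective _ hmono.injective, ← Finset.coe_Iic, Set.ncard_coe_finset,
    Nat.card_Iic]

end Multigrid

lemma tendsto_div_of_abs_sub_mul_le {α : ℕ → ℝ} {χ C : ℝ} (h : ∀ n : ℕ, |α n - n * χ| ≤ C) :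
    Tendsto (fun n : ℕ => α n / n) atTop (nhds χ) := by
  rw [tendsto_iff_norm_sub_tendsto_zero]
  refine squeeze_zero' (Eventually.of_forall fun n => norm_nonneg _) ?_
    ((tendsto_const_nhds (x := C)).div_atTop tendsto_natCast_atTop_atTop)
  filter_upwards [eventually_gt_atTop 0] with n hn
  have hn' : (0 : ℝ) < n := Nat.cast_pos.2 hn
  rw [Real.norm_eq_abs, ← mul_div_cancel_left₀ χ hn'.ne', ← sub_div, abs_div, abs_of_pos hn']
  exact div_le_div_of_nonneg_right (h n) hn'.le

theorem nth_intersection_point_general (d : ℕ) (ζ : Fin d → ℂ) (i : Fin d)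
    (hnonpar : ∀ j k : Fin d, j ≠ k → ∀ t : ℝ, ζ k ≠ t • ζ j) :
    ∃ δ₀ : ℝ, ∀ (γ : Fin d → ℝ) (z : ℂ) (α : ℕ → ℝ),
      Regular ζ γ →
      onGrid ζ γ i z →
      StrictMono α →
      (∀ n, 0 < α n) →
      -- each `z + αₙ ζᵢ^⊥` is an intersection point with another grid line
      (∀ n, ∃ j, j ≠ i ∧ onGrid ζ γ j (z + α n • perp (ζ i))) →
      -- and every intersection point in direction `ζᵢ^⊥` is one of the `z + αₙ ζᵢ^⊥`
      (∀ x : ℝ, 0 < x → (∃ j, j ≠ i ∧ onGrid ζ γ j (z + x • perp (ζ i))) → ∃ n, α n = x) →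
      (∀ n : ℕ, |α n - n * charLen ζ i| ≤ δ₀) ∧
        Tendsto (fun n : ℕ => α n / n) atTop (nhds (charLen ζ i)) := by
  refine ⟨d * charLen ζ i, fun γ z α hreg hz hmono hpos hint hsur => ?_⟩
  have hc : ∀ j ≠ i, dotp (perp (ζ i)) (ζ j) ≠ 0 := fun j hji =>
    dotp_perp_ne_zero (fun h => hnonpar j i hji 0 (by rw [h, zero_smul]))
      (hnonpar i j hji.symm)
  obtain ⟨j₀, hj₀i, -⟩ := hint 0
  have hχ := charLen_pos hj₀i hc
  have hbound : ∀ n : ℕ, |α n - n * charLen ζ i| ≤ d * charLen ζ i := fun n => by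
    have hcount := abs_sum_ncard_crossings_sub_le (γ := γ) (z := z) hc (hpos n).le
    rw [← Nat.cast_sum, ← succ_eq_sum_ncard_crossings hreg hz hc hmono hpos hint hsur n,
      abs_sub_comm] at hcount
    have hsplit : α n - n * charLen ζ i
        = charLen ζ i * ((charLen ζ i)⁻¹ * α n - ↑(n + 1) + 1) := by
      field_simp
      push_cast
      ring
    calc |α n - n * charLen ζ i|
        = charLen ζ i * |(charLen ζ i)⁻¹ * α n - ↑(n + 1) + 1| := by
          rw [hsplit, abs_mul, abs_of_pos hχ]
      _ ≤ charLen ζ i * (d - 1 + 1) := by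
          gcongr
          exact (abs_add_le _ _).trans (by rw [abs_one]; linarith)
      _ = d * charLen ζ i := by ring
  exact ⟨hbound, tendsto_div_of_abs_sub_mul_le hbound⟩

/-- Let `z` be a point on an `i`-line of a regular multigrid, and `z + αₙ ζᵢ^⊥` the `n`-th
intersection point of that line with other grid lines in direction `ζᵢ^⊥`.  There is a
constant `δ₀` depending only on `d` and the directions `ζ` such that `|αₙ − n·χᵢ| ≤ δ₀`
for all `n`; in particular `αₙ/n → χᵢ`. -/
theorem nth_intersection_point (d : ℕ) (ζ : Fin d → ℂ) (i : Fin d)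
    (hd : 2 ≤ d)
    (hunit : ∀ j, ‖ζ j‖ = 1)
    (hnonpar : ∀ j k : Fin d, j ≠ k → ∀ t : ℝ, ζ k ≠ t • ζ j) :
    ∃ δ₀ : ℝ, ∀ (γ : Fin d → ℝ) (z : ℂ) (α : ℕ → ℝ),
      Regular ζ γ →
      onGrid ζ γ i z →
      StrictMono α →
      (∀ n, 0 < α n) →
      -- each `z + αₙ ζᵢ^⊥` is an intersection point with another grid line
      (∀ n, ∃ j, j ≠ i ∧ onGrid ζ γ j (z + α n • perp (ζ i))) →
      -- and every intersection point in direction `ζᵢ^⊥` is one of the `z + αₙ ζᵢ^⊥`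
      (∀ x : ℝ, 0 < x → (∃ j, j ≠ i ∧ onGrid ζ γ j (z + x • perp (ζ i))) → ∃ n, α n = x) →
      (∀ n : ℕ, |α n - n * charLen ζ i| ≤ δ₀) ∧
        Tendsto (fun n : ℕ => α n / n) atTop (nhds (charLen ζ i)) :=
  nth_intersection_point_general d ζ i hnonpar
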